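/- There is a unique ρ₀ ∈ ℰ̄¹ with ⟨ρ₀, v⟩ = 0 for all v ∈ 𝒢, and a unique ρ₀' ∈ ℰ̄¹ with ⟨ρ₀', w(v)⟩ = 0 for all v ∈ 𝒢; they satisfy ⟨ρ₀, α⟩ = −1 and ⟨ρ₀', α⟩ = 1, and moreover α ∈ ℜ_{ρ₀}(ℰ̄). -/

import Mathlib

open scoped BigOperators

namespace RootSubgroups

/-- The natural pairing on `ℚⁿ`, identifying `N_ℚ` with the dual of `M_ℚ`. -/
def pairQ {n : ℕ} (q v : Fin n → ℚ) : ℚ := ∑ i, q i * v i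

/-- A vector of `M_ℚ = ℚⁿ` is a lattice point (lies in `M = ℤⁿ`) if all its
coordinates are integers. -/
def IsLatticePt {n : ℕ} (v : Fin n → ℚ) : Prop := ∀ i, ∃ z : ℤ, v i = (z : ℚ)

/-- The convex cone generated by a set `S ⊆ ℚⁿ`: all finite nonnegative
rational combinations of elements of `S`. -/
def coneHull {n : ℕ} (S : Set (Fin n → ℚ)) : Set (Fin n → ℚ) :=
  {x | ∃ (F : Finset (Fin n → ℚ)) (c : (Fin n → ℚ) → ℚ),
      (F : Set (Fin n → ℚ)) ⊆ S ∧ (∀ v, 0 ≤ c v) ∧ x = ∑ v ∈ F, c v • v}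

/-- A finitely generated convex cone: the cone generated by a finite set. -/
def IsFGCone {n : ℕ} (C : Set (Fin n → ℚ)) : Prop :=
  ∃ S : Finset (Fin n → ℚ), C = coneHull (S : Set (Fin n → ℚ))

/-- The dual cone `ℰ = 𝒢^∨ = {q : ⟨q, v⟩ ≥ 0 for all v ∈ 𝒢}`. -/
def dualCone {n : ℕ} (C : Set (Fin n → ℚ)) : Set (Fin n → ℚ) :=
  {q | ∀ v ∈ C, 0 ≤ pairQ q v}

/-- A face of the dual cone `ℰ = C^∨`: a subset of the form
`{q ∈ ℰ : ⟨q, v⟩ = 0}` for some `v ∈ C`. -/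
def IsFaceOfDual {n : ℕ} (C F : Set (Fin n → ℚ)) : Prop :=
  ∃ v ∈ C, F = {q ∈ dualCone C | pairQ q v = 0}

/-- The ray `ℚ_{≥0}·ρ` spanned by a vector `ρ`. -/
def raySet {n : ℕ} (ρ : Fin n → ℚ) : Set (Fin n → ℚ) :=
  {x | ∃ c : ℚ, 0 ≤ c ∧ x = c • ρ}

/-- A lattice vector is primitive if it is not a positive integer multiple
`k·q` (`k ≠ 1`) of a lattice vector `q`. -/
def IsPrimitive {n : ℕ} (ρ : Fin n → ℚ) : Prop :=
  IsLatticePt ρ ∧ ∀ (k : ℕ) (q : Fin n → ℚ), IsLatticePt q → ρ = (k : ℚ) • q → k = 1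

/-- `ℰ¹`: the set of primitive lattice vectors `ρ ∈ N` such that `ℚ_{≥0}·ρ` is
a ray (one-dimensional face) of the dual cone `ℰ = C^∨`. -/
def E1 {n : ℕ} (C : Set (Fin n → ℚ)) : Set (Fin n → ℚ) :=
  {ρ | IsPrimitive ρ ∧ IsFaceOfDual C (raySet ρ)}

/-- The Demazure roots of `ℰ = C^∨` at `ρ ∈ ℰ¹`:
`ℜ_ρ(ℰ) = {e ∈ M : ⟨ρ, e⟩ = −1 and ⟨ρ', e⟩ ≥ 0 for all ρ' ∈ ℰ¹ \ {ρ}}`. -/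
def DemRootsAt {n : ℕ} (C : Set (Fin n → ℚ)) (ρ : Fin n → ℚ) : Set (Fin n → ℚ) :=
  {e | IsLatticePt e ∧ pairQ ρ e = -1 ∧ ∀ ρ' ∈ E1 C, ρ' ≠ ρ → 0 ≤ pairQ ρ' e}

/-- The set `ℜ(ℰ)` of all Demazure roots of `ℰ = C^∨`. -/
def DemRoots {n : ℕ} (C : Set (Fin n → ℚ)) : Set (Fin n → ℚ) :=
  ⋃ ρ ∈ E1 C, DemRootsAt C ρ

/-- A face of the cone `C`: a subset of the form `{v ∈ C : ⟨q, v⟩ = 0}` for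
some `q` in the dual cone of `C`. -/
def IsFaceOfCone {n : ℕ} (C F : Set (Fin n → ℚ)) : Prop :=
  ∃ q ∈ dualCone C, F = {v ∈ C | pairQ q v = 0}

/-- A facet of the cone `C`: a face whose linear span has codimension one in
the linear span of `C`. -/
def IsFacetOfCone {n : ℕ} (C F : Set (Fin n → ℚ)) : Prop :=
  IsFaceOfCone C F ∧
    Module.finrank ℚ ↥(Submodule.span ℚ F) + 1 = Module.finrank ℚ ↥(Submodule.span ℚ C)

end RootSubgroups

namespace RootSubgroups

/-- The embedding of `M_ℚ = ℚⁿ` into `M̄_ℚ = ℚ^{n+1}`, where the last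
coordinate is the coefficient of the extra basis element `α`. -/
def emb {n : ℕ} (v : Fin n → ℚ) : Fin (n + 1) → ℚ := Fin.snoc v 0

/-- The extra basis element `α` of `M̄ = M ⊕ ℤα`. -/
def alphaVec (n : ℕ) : Fin (n + 1) → ℚ := Fin.snoc 0 1

/-- The involution `w(x) = x − α^∨(x)·α` of `M̄_ℚ`, where the homomorphism
`α^∨ : M̄ → ℤ` is represented by pairing with a lattice vector `ac ∈ N̄`. -/
def wmap {n : ℕ} (ac : Fin (n + 1) → ℚ) (x : Fin (n + 1) → ℚ) : Fin (n + 1) → ℚ :=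
  x - pairQ ac x • alphaVec n

/-- The cone `𝒢̄ ⊆ M̄_ℚ` generated by `𝒢 ∪ w(𝒢)`. -/
def barCone {n : ℕ} (ac : Fin (n + 1) → ℚ) (C : Set (Fin n → ℚ)) :
    Set (Fin (n + 1) → ℚ) :=
  coneHull (emb '' C ∪ wmap ac '' (emb '' C))

end RootSubgroups

namespace RootSubgroups

variable {n : ℕ}

lemma pairQ_zero_left (v : Fin n → ℚ) : pairQ 0 v = 0 := by simp [pairQ]

lemma pairQ_add_left (p q v : Fin n → ℚ) : pairQ (p + q) v = pairQ p v + pairQ q v := by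
  simp [pairQ, add_mul, Finset.sum_add_distrib]

lemma pairQ_smul_left (q v : Fin n → ℚ) (c : ℚ) : pairQ (c • q) v = c * pairQ q v := by
  simp [pairQ, Finset.mul_sum, mul_assoc]

lemma pairQ_sub_left (p q v : Fin n → ℚ) : pairQ (p - q) v = pairQ p v - pairQ q v := by
  simp [pairQ, sub_mul, Finset.sum_sub_distrib]

lemma pairQ_add_right (q x y : Fin n → ℚ) : pairQ q (x + y) = pairQ q x + pairQ q y := by
  simp [pairQ, mul_add, Finset.sum_add_distrib]

lemma pairQ_smul_right (q v : Fin n → ℚ) (c : ℚ) : pairQ q (c • v) = c * pairQ q v := by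
  simp [pairQ, Finset.mul_sum]; exact Finset.sum_congr rfl fun i _ => by ring

lemma pairQ_sub_right (q x y : Fin n → ℚ) : pairQ q (x - y) = pairQ q x - pairQ q y := by
  simp [pairQ, mul_sub, Finset.sum_sub_distrib]

lemma pairQ_sum (q : Fin n → ℚ) (F : Finset (Fin n → ℚ)) (c : (Fin n → ℚ) → ℚ) :
    pairQ q (∑ v ∈ F, c v • v) = ∑ v ∈ F, c v * pairQ q v := by
  classical
  induction F using Finset.induction with
  | empty => simp [pairQ]
  | insert _ _ h ih => rw [Finset.sum_insert h, pairQ_add_right, pairQ_smul_right, ih,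
      Finset.sum_insert h]

lemma pairQ_finsetSum (q : Fin n → ℚ) (F : Finset (Fin n → ℚ)) :
    pairQ q (∑ v ∈ F, v) = ∑ v ∈ F, pairQ q v := by
  have := pairQ_sum q F (fun _ => 1)
  simpa using this

lemma subset_coneHull (S : Set (Fin n → ℚ)) : S ⊆ coneHull S := by
  intro s hs
  exact ⟨{s}, fun _ => 1, by simpa using hs, fun _ => zero_le_one, by simp⟩

lemma mem_dualCone_coneHull {S : Set (Fin n → ℚ)} {q : Fin n → ℚ} :
    q ∈ dualCone (coneHull S) ↔ ∀ s ∈ S, 0 ≤ pairQ q s := by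
  constructor
  · exact fun h s hs => h s (subset_coneHull S hs)
  · rintro h v ⟨F, c, hFS, hc, rfl⟩
    rw [pairQ_sum]
    exact Finset.sum_nonneg fun v hv => mul_nonneg (hc v) (h v (hFS hv))

lemma pairQ_coneHull_zero {S : Set (Fin n → ℚ)} {q : Fin n → ℚ}
    (h : ∀ s ∈ S, pairQ q s = 0) : ∀ v ∈ coneHull S, pairQ q v = 0 := by
  rintro v ⟨F, c, hFS, hc, rfl⟩
  rw [pairQ_sum]
  exact Finset.sum_eq_zero fun v hv => by rw [h v (hFS hv), mul_zero]


/-- Restriction of a functional on `ℚ^{n+1}` to the first `n` coordinates. -/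
def res {n : ℕ} (q : Fin (n + 1) → ℚ) : Fin n → ℚ := fun i => q i.castSucc

/-- The distinguished dual vector `ρ₀ = -e_{n}^*`. -/
def rho0 (n : ℕ) : Fin (n + 1) → ℚ := Fin.snoc 0 (-1)

lemma res_rho0 : res (rho0 n) = 0 := by
  funext i; simp [res, rho0]

lemma rho0_last : rho0 n (Fin.last n) = -1 := by simp [rho0]

lemma pairQ_split (q x : Fin (n + 1) → ℚ) :
    pairQ q x = pairQ (res q) (res x) + q (Fin.last n) * x (Fin.last n) := by
  simp [pairQ, res, Fin.sum_univ_castSucc]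

lemma res_emb (v : Fin n → ℚ) : res (emb v) = v := by
  funext i; simp [res, emb]

lemma emb_last (v : Fin n → ℚ) : emb v (Fin.last n) = 0 := by simp [emb]

lemma pairQ_emb (q : Fin (n + 1) → ℚ) (v : Fin n → ℚ) :
    pairQ q (emb v) = pairQ (res q) v := by
  rw [pairQ_split, res_emb, emb_last, mul_zero, add_zero]

lemma pairQ_alpha (q : Fin (n + 1) → ℚ) : pairQ q (alphaVec n) = q (Fin.last n) := by
  rw [pairQ_split]
  have h1 : res (alphaVec n) = 0 := by funext i; simp [res, alphaVec]
  have h2 : alphaVec n (Fin.last n) = 1 := by simp [alphaVec]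
  rw [h1, h2, mul_one]
  simp [pairQ]

lemma pairQ_wmap (q ac x : Fin (n + 1) → ℚ) :
    pairQ q (wmap ac x) = pairQ q x - pairQ ac x * q (Fin.last n) := by
  rw [wmap, pairQ_sub_right, pairQ_smul_right, pairQ_alpha]

lemma pairQ_wmap_emb (q ac : Fin (n + 1) → ℚ) (v : Fin n → ℚ) :
    pairQ q (wmap ac (emb v)) = pairQ (res q - q (Fin.last n) • res ac) v := by
  rw [pairQ_wmap, pairQ_sub_left, pairQ_smul_left, pairQ_emb, pairQ_emb]; ring

lemma mem_dual_barCone {ac : Fin (n + 1) → ℚ} {C : Set (Fin n → ℚ)}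
    {q : Fin (n + 1) → ℚ} :
    q ∈ dualCone (barCone ac C) ↔
      (∀ v ∈ C, 0 ≤ pairQ q (emb v)) ∧ (∀ v ∈ C, 0 ≤ pairQ q (wmap ac (emb v))) := by
  rw [barCone, mem_dualCone_coneHull]
  constructor
  · intro h
    exact ⟨fun v hv => h _ (Set.mem_union_left _ ⟨v, hv, rfl⟩),
      fun v hv => h _ (Set.mem_union_right _ ⟨emb v, ⟨v, hv, rfl⟩, rfl⟩)⟩
  · rintro ⟨h1, h2⟩ s (⟨v, hv, rfl⟩ | ⟨_, ⟨v, hv, rfl⟩, rfl⟩)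
    · exact h1 v hv
    · exact h2 v hv

lemma vanish_of_span {C : Set (Fin n → ℚ)} (hfull : Submodule.span ℚ C = ⊤)
    (a : Fin n → ℚ) (h : ∀ v ∈ C, pairQ a v = 0) : a = 0 := by
  have hL : ∀ x ∈ Submodule.span ℚ C, pairQ a x = 0 := by
    intro x hx
    induction hx using Submodule.span_induction with
    | mem x hx => exact h x hx
    | zero => simp [pairQ]
    | add x y _ _ hx hy => rw [pairQ_add_right, hx, hy, add_zero]
    | smul c x _ hx => rw [pairQ_smul_right, hx, mul_zero]
  funext i
  have := hL (Pi.single i 1) (by rw [hfull]; trivial)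
  simpa [pairQ, Pi.single_apply, mul_ite, Finset.sum_ite_eq'] using this

lemma rho0_lattice : IsLatticePt (rho0 n) := by
  intro i
  refine Fin.lastCases ?_ ?_ i
  · exact ⟨-1, by simp [rho0]⟩
  · intro j; exact ⟨0, by simp [rho0]⟩

lemma rho0_pair_emb (v : Fin n → ℚ) : pairQ (rho0 n) (emb v) = 0 := by
  rw [pairQ_emb, res_rho0, pairQ_zero_left]

lemma rho0_pair_wmap (ac : Fin (n + 1) → ℚ) (v : Fin n → ℚ) :
    pairQ (rho0 n) (wmap ac (emb v)) = pairQ ac (emb v) := by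
  rw [pairQ_wmap_emb, res_rho0, rho0_last, pairQ_emb]
  norm_num [pairQ_sub_left, pairQ_smul_left, pairQ_zero_left]

lemma rho0_mem_dual {ac : Fin (n + 1) → ℚ} {C : Set (Fin n → ℚ)}
    (hnn : ∀ v ∈ C, 0 ≤ pairQ ac (emb v)) : rho0 n ∈ dualCone (barCone ac C) :=
  mem_dual_barCone.2 ⟨fun v _ => by rw [rho0_pair_emb],
    fun v hv => by rw [rho0_pair_wmap]; exact hnn v hv⟩

lemma res_sub_alpha (ac : Fin (n + 1) → ℚ) : res (ac - alphaVec n) = res ac := by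
  funext i; simp [res, alphaVec]

lemma ac_last_eq_two {ac : Fin (n + 1) → ℚ} (haca : pairQ ac (alphaVec n) = 2) :
    ac (Fin.last n) = 2 := by rw [← haca, pairQ_alpha]

lemma sub_alpha_last {ac : Fin (n + 1) → ℚ} (hac2 : ac (Fin.last n) = 2) :
    (ac - alphaVec n) (Fin.last n) = 1 := by
  simp [alphaVec, hac2]; norm_num

lemma rho0'_pair_emb (ac : Fin (n + 1) → ℚ) (v : Fin n → ℚ) :
    pairQ (ac - alphaVec n) (emb v) = pairQ ac (emb v) := by
  rw [pairQ_emb, res_sub_alpha, pairQ_emb]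

lemma rho0'_pair_wmap {ac : Fin (n + 1) → ℚ} (hac2 : ac (Fin.last n) = 2)
    (v : Fin n → ℚ) : pairQ (ac - alphaVec n) (wmap ac (emb v)) = 0 := by
  rw [pairQ_wmap_emb, res_sub_alpha, sub_alpha_last hac2, one_smul, sub_self,
    pairQ_zero_left]

lemma rho0'_mem_dual {ac : Fin (n + 1) → ℚ} {C : Set (Fin n → ℚ)}
    (hac2 : ac (Fin.last n) = 2)
    (hnn : ∀ v ∈ C, 0 ≤ pairQ ac (emb v)) :
    (ac - alphaVec n) ∈ dualCone (barCone ac C) :=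
  mem_dual_barCone.2 ⟨fun v hv => by rw [rho0'_pair_emb]; exact hnn v hv,
    fun v _ => by rw [rho0'_pair_wmap hac2]⟩

lemma rho0'_lattice {ac : Fin (n + 1) → ℚ} (hacL : IsLatticePt ac) :
    IsLatticePt (ac - alphaVec n) := by
  intro i
  refine Fin.lastCases ?_ ?_ i
  · obtain ⟨z, hz⟩ := hacL (Fin.last n)
    exact ⟨z - 1, by simp [alphaVec, hz]⟩
  · intro j
    obtain ⟨z, hz⟩ := hacL j.castSucc
    exact ⟨z, by simp [alphaVec, hz]⟩

lemma prim_aux {ρ : Fin (n + 1) → ℚ} (hL : IsLatticePt ρ)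
    (hlast : ρ (Fin.last n) = 1 ∨ ρ (Fin.last n) = -1) : IsPrimitive ρ := by
  refine ⟨hL, fun k q hqL heq => ?_⟩
  obtain ⟨z, hz⟩ := hqL (Fin.last n)
  have hk := congrFun heq (Fin.last n)
  simp only [Pi.smul_apply, smul_eq_mul, hz] at hk
  have hkz : (k : ℤ) * z = 1 ∨ (k : ℤ) * z = -1 := by
    rcases hlast with h | h
    · left; exact_mod_cast h ▸ hk.symm
    · right; exact_mod_cast h ▸ hk.symm
  rcases hkz with h | h
  · have : (k : ℤ) = 1 := Int.eq_one_of_mul_eq_one_right (by positivity) h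
    exact_mod_cast this
  · have h' : (k : ℤ) * (-z) = 1 := by linarith
    have : (k : ℤ) = 1 := Int.eq_one_of_mul_eq_one_right (by positivity) h'
    exact_mod_cast this

lemma isPrimitive_rho0 : IsPrimitive (rho0 n) :=
  prim_aux rho0_lattice (Or.inr rho0_last)

lemma isPrimitive_rho0' {ac : Fin (n + 1) → ℚ} (hacL : IsLatticePt ac)
    (hac2 : ac (Fin.last n) = 2) : IsPrimitive (ac - alphaVec n) :=
  prim_aux (rho0'_lattice hacL) (Or.inl (sub_alpha_last hac2))

lemma not_isPrimitive_zero : ¬ IsPrimitive (0 : Fin (n + 1) → ℚ) := by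
  rintro ⟨-, h⟩
  have := h 0 0 (fun i => ⟨0, rfl⟩) (by simp)
  simp at this

lemma eq_rho0_of {ρ : Fin (n + 1) → ℚ} (hprim : IsPrimitive ρ)
    (hres : res ρ = 0) (hle : ρ (Fin.last n) ≤ 0) : ρ = rho0 n := by
  obtain ⟨z, hz⟩ := hprim.1 (Fin.last n)
  have hz0 : z ≤ 0 := by exact_mod_cast hz ▸ hle
  rcases eq_or_lt_of_le hz0 with h0 | hneg
  · exfalso
    have hρ : ρ = 0 := by
      funext i
      refine Fin.lastCases ?_ ?_ i
      · rw [hz, h0]; norm_num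
      · intro j; exact congrFun hres j
    exact not_isPrimitive_zero (hρ ▸ hprim)
  · have hm : (((-z).toNat : ℕ) : ℚ) = -(z : ℚ) := by
      have h := Int.toNat_of_nonneg (a := -z) (by omega)
      exact_mod_cast h
    have hcz : ∀ j : Fin n, ρ j.castSucc = 0 := fun j => by
      have := congrFun hres j; simpa [res] using this
    have heq : ρ = (((-z).toNat : ℕ) : ℚ) • rho0 n := by
      funext i
      refine Fin.lastCases ?_ ?_ i
      · simp only [Pi.smul_apply, smul_eq_mul, rho0_last, hz, hm]; ring
      · intro j
        simp only [Pi.smul_apply, smul_eq_mul, hcz j]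
        simp [rho0]
    have h1 := hprim.2 _ _ rho0_lattice heq
    rw [heq, h1]
    norm_num

lemma eq_rho0'_of {ac ρ : Fin (n + 1) → ℚ} (hprim : IsPrimitive ρ)
    (hacL : IsLatticePt ac) (hac2 : ac (Fin.last n) = 2)
    (hres : res ρ = ρ (Fin.last n) • res ac) (hge : 0 ≤ ρ (Fin.last n)) :
    ρ = ac - alphaVec n := by
  obtain ⟨z, hz⟩ := hprim.1 (Fin.last n)
  have hz0 : 0 ≤ z := by exact_mod_cast hz ▸ hge
  rcases eq_or_lt_of_le hz0 with h0 | hpos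
  · exfalso
    have hρ : ρ = 0 := by
      funext i
      refine Fin.lastCases ?_ ?_ i
      · rw [hz, ← h0]; norm_num
      · intro j
        have := congrFun hres j
        simp only [Pi.smul_apply, smul_eq_mul, hz, ← h0] at this
        simpa [res] using this
    exact not_isPrimitive_zero (hρ ▸ hprim)
  · have hm : ((z.toNat : ℕ) : ℚ) = (z : ℚ) := by
      have h := Int.toNat_of_nonneg (a := z) (by omega)
      exact_mod_cast h
    have hca : ∀ j : Fin n, (ac - alphaVec n) j.castSucc = ac j.castSucc := fun j => by
      simp [alphaVec]
    have hcz : ∀ j : Fin n, ρ j.castSucc = ρ (Fin.last n) * ac j.castSucc := fun j => by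
      have := congrFun hres j; simpa [res] using this
    have heq : ρ = ((z.toNat : ℕ) : ℚ) • (ac - alphaVec n) := by
      funext i
      refine Fin.lastCases ?_ ?_ i
      · simp only [Pi.smul_apply, smul_eq_mul, sub_alpha_last hac2, hz, hm, mul_one]
      · intro j
        simp only [Pi.smul_apply, smul_eq_mul, hcz j, hca j, hz, hm]
    have h1 := hprim.2 _ _ (rho0'_lattice hacL) heq
    rw [heq, h1]
    norm_num

lemma E1_mem_dual {m : ℕ} {C' : Set (Fin m → ℚ)} {ρ : Fin m → ℚ}
    (h : ρ ∈ E1 C') : ρ ∈ dualCone C' := by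
  obtain ⟨-, v, -, hface⟩ := h
  have hself : ρ ∈ raySet ρ := ⟨1, zero_le_one, (one_smul ℚ ρ).symm⟩
  rw [hface] at hself
  exact hself.1

lemma dual_vanish_emb {ac : Fin (n + 1) → ℚ} {C : Set (Fin n → ℚ)}
    (hfull : Submodule.span ℚ C = ⊤)
    (hnn : ∀ v ∈ C, 0 ≤ pairQ ac (emb v))
    (hnz : ∃ v ∈ C, pairQ ac (emb v) ≠ 0)
    {q : Fin (n + 1) → ℚ} (hq : q ∈ dualCone (barCone ac C))
    (hv : ∀ v ∈ C, pairQ q (emb v) = 0) :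
    res q = 0 ∧ q (Fin.last n) ≤ 0 := by
  have h1 : res q = 0 :=
    vanish_of_span hfull _ (fun v hv' => by rw [← pairQ_emb]; exact hv v hv')
  refine ⟨h1, ?_⟩
  obtain ⟨v0, hv0C, hv0⟩ := hnz
  have hpos : 0 < pairQ ac (emb v0) := lt_of_le_of_ne (hnn v0 hv0C) (Ne.symm hv0)
  have h2 := (mem_dual_barCone.1 hq).2 v0 hv0C
  rw [pairQ_wmap_emb, h1, zero_sub, ← neg_smul, pairQ_smul_left, ← pairQ_emb] at h2
  nlinarith [h2, hpos]

lemma dual_vanish_wemb {ac : Fin (n + 1) → ℚ} {C : Set (Fin n → ℚ)}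
    (hfull : Submodule.span ℚ C = ⊤)
    (hnn : ∀ v ∈ C, 0 ≤ pairQ ac (emb v))
    (hnz : ∃ v ∈ C, pairQ ac (emb v) ≠ 0)
    {q : Fin (n + 1) → ℚ} (hq : q ∈ dualCone (barCone ac C))
    (hv : ∀ v ∈ C, pairQ q (wmap ac (emb v)) = 0) :
    res q = q (Fin.last n) • res ac ∧ 0 ≤ q (Fin.last n) := by
  have h1 : res q - q (Fin.last n) • res ac = 0 :=
    vanish_of_span hfull _ (fun v hv' => by rw [← pairQ_wmap_emb]; exact hv v hv')
  have h1' : res q = q (Fin.last n) • res ac := by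
    have := sub_eq_zero.1 h1; exact this
  refine ⟨h1', ?_⟩
  obtain ⟨v0, hv0C, hv0⟩ := hnz
  have hpos : 0 < pairQ ac (emb v0) := lt_of_le_of_ne (hnn v0 hv0C) (Ne.symm hv0)
  have h2 := (mem_dual_barCone.1 hq).1 v0 hv0C
  rw [pairQ_emb, h1', pairQ_smul_left, ← pairQ_emb] at h2
  nlinarith [h2, hpos]

lemma face_rho0 {ac : Fin (n + 1) → ℚ} {C : Set (Fin n → ℚ)}
    (S : Finset (Fin n → ℚ)) (hS : C = coneHull (S : Set (Fin n → ℚ)))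
    (hfull : Submodule.span ℚ C = ⊤)
    (hnn : ∀ v ∈ C, 0 ≤ pairQ ac (emb v))
    (hnz : ∃ v ∈ C, pairQ ac (emb v) ≠ 0) :
    IsFaceOfDual (barCone ac C) (raySet (rho0 n)) := by
  classical
  refine ⟨∑ u ∈ S.image emb, u, ?_, ?_⟩
  · refine ⟨S.image emb, fun _ => 1, ?_, fun _ => zero_le_one, by simp⟩
    intro u hu
    simp only [Finset.coe_image, Set.mem_image, Finset.mem_coe] at hu
    obtain ⟨s, hs, rfl⟩ := hu
    exact Set.mem_union_left _ ⟨s, hS ▸ subset_coneHull _ hs, rfl⟩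
  · ext q
    constructor
    · rintro ⟨c, hc, rfl⟩
      refine ⟨mem_dual_barCone.2 ⟨fun v _ => by
          rw [pairQ_smul_left, rho0_pair_emb, mul_zero], fun v hv => by
          rw [pairQ_smul_left, rho0_pair_wmap]
          exact mul_nonneg hc (hnn v hv)⟩, ?_⟩
      rw [pairQ_finsetSum]
      refine Finset.sum_eq_zero fun u hu => ?_
      obtain ⟨s, hs, rfl⟩ := Finset.mem_image.1 hu
      rw [pairQ_smul_left, rho0_pair_emb, mul_zero]
    · rintro ⟨hqd, hq0⟩
      rw [pairQ_finsetSum] at hq0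
      have hz : ∀ u ∈ S.image emb, pairQ q u = 0 := by
        refine (Finset.sum_eq_zero_iff_of_nonneg ?_).1 hq0
        intro u hu
        obtain ⟨s, hs, rfl⟩ := Finset.mem_image.1 hu
        exact (mem_dual_barCone.1 hqd).1 s (hS ▸ subset_coneHull _ hs)
      have hvC : ∀ v ∈ C, pairQ q (emb v) = 0 := by
        intro v hv
        rw [pairQ_emb]
        refine pairQ_coneHull_zero (S := (S : Set (Fin n → ℚ))) ?_ v (hS ▸ hv)
        intro s hs
        rw [← pairQ_emb]
        exact hz (emb s) (Finset.mem_image_of_mem _ hs)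
      obtain ⟨h1, h2⟩ := dual_vanish_emb hfull hnn hnz hqd hvC
      refine ⟨-(q (Fin.last n)), by linarith, ?_⟩
      funext i
      refine Fin.lastCases ?_ ?_ i
      · simp only [Pi.smul_apply, smul_eq_mul, rho0_last]; ring
      · intro j
        have := congrFun h1 j
        simp only [res, Pi.zero_apply] at this
        simp [this, rho0]

lemma face_rho0' {ac : Fin (n + 1) → ℚ} {C : Set (Fin n → ℚ)}
    (S : Finset (Fin n → ℚ)) (hS : C = coneHull (S : Set (Fin n → ℚ)))
    (hfull : Submodule.span ℚ C = ⊤)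
    (hac2 : ac (Fin.last n) = 2)
    (hnn : ∀ v ∈ C, 0 ≤ pairQ ac (emb v))
    (hnz : ∃ v ∈ C, pairQ ac (emb v) ≠ 0) :
    IsFaceOfDual (barCone ac C) (raySet (ac - alphaVec n)) := by
  classical
  refine ⟨∑ u ∈ S.image (fun s => wmap ac (emb s)), u, ?_, ?_⟩
  · refine ⟨S.image (fun s => wmap ac (emb s)), fun _ => 1, ?_, fun _ => zero_le_one,
      by simp⟩
    intro u hu
    simp only [Finset.coe_image, Set.mem_image, Finset.mem_coe] at hu
    obtain ⟨s, hs, rfl⟩ := hu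
    exact Set.mem_union_right _ ⟨emb s, ⟨s, hS ▸ subset_coneHull _ hs, rfl⟩, rfl⟩
  · ext q
    constructor
    · rintro ⟨c, hc, rfl⟩
      refine ⟨mem_dual_barCone.2 ⟨fun v hv => by
          rw [pairQ_smul_left, rho0'_pair_emb]
          exact mul_nonneg hc (hnn v hv), fun v _ => by
          rw [pairQ_smul_left, rho0'_pair_wmap hac2, mul_zero]⟩, ?_⟩
      rw [pairQ_finsetSum]
      refine Finset.sum_eq_zero fun u hu => ?_
      obtain ⟨s, hs, rfl⟩ := Finset.mem_image.1 hu
      rw [pairQ_smul_left, rho0'_pair_wmap hac2, mul_zero]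
    · rintro ⟨hqd, hq0⟩
      rw [pairQ_finsetSum] at hq0
      have hz : ∀ u ∈ S.image (fun s => wmap ac (emb s)), pairQ q u = 0 := by
        refine (Finset.sum_eq_zero_iff_of_nonneg ?_).1 hq0
        intro u hu
        obtain ⟨s, hs, rfl⟩ := Finset.mem_image.1 hu
        exact (mem_dual_barCone.1 hqd).2 s (hS ▸ subset_coneHull _ hs)
      have hvC : ∀ v ∈ C, pairQ q (wmap ac (emb v)) = 0 := by
        intro v hv
        rw [pairQ_wmap_emb]
        refine pairQ_coneHull_zero (S := (S : Set (Fin n → ℚ))) ?_ v (hS ▸ hv)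
        intro s hs
        rw [← pairQ_wmap_emb]
        exact hz _ (Finset.mem_image_of_mem _ hs)
      obtain ⟨h1, h2⟩ := dual_vanish_wemb hfull hnn hnz hqd hvC
      refine ⟨q (Fin.last n), h2, ?_⟩
      funext i
      refine Fin.lastCases ?_ ?_ i
      · simp only [Pi.smul_apply, smul_eq_mul, sub_alpha_last hac2, mul_one]
      · intro j
        have := congrFun h1 j
        simp only [res, Pi.smul_apply, smul_eq_mul] at this
        simp only [Pi.smul_apply, smul_eq_mul, this]
        simp [alphaVec]

lemma E1_last_nonneg {ac : Fin (n + 1) → ℚ} {C : Set (Fin n → ℚ)}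
    (hnn : ∀ v ∈ C, 0 ≤ pairQ ac (emb v))
    {ρ' : Fin (n + 1) → ℚ} (hρ' : ρ' ∈ E1 (barCone ac C)) (hne : ρ' ≠ rho0 n) :
    0 ≤ ρ' (Fin.last n) := by
  by_contra hneg
  push_neg at hneg
  obtain ⟨hprim, vb, hvbG, hface⟩ := hρ'
  have hself : ρ' ∈ raySet ρ' := ⟨1, zero_le_one, (one_smul ℚ ρ').symm⟩
  rw [hface] at hself
  obtain ⟨hρd, hρv⟩ := hself
  set c := ρ' (Fin.last n) with hc
  have hres'' : res (ρ' + c • rho0 n) = res ρ' := by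
    funext i; simp [res, rho0]
  have hlast'' : (ρ' + c • rho0 n) (Fin.last n) = 0 := by
    simp [rho0, hc]
  have hρ''d : (ρ' + c • rho0 n) ∈ dualCone (barCone ac C) := by
    refine mem_dual_barCone.2 ⟨?_, ?_⟩
    · intro v hv
      rw [pairQ_add_left, pairQ_smul_left, rho0_pair_emb, mul_zero, add_zero]
      exact (mem_dual_barCone.1 hρd).1 v hv
    · intro v hv
      rw [pairQ_wmap_emb, hres'', hlast'', zero_smul, sub_zero, ← pairQ_emb]
      exact (mem_dual_barCone.1 hρd).1 v hv
  have hrho0d : rho0 n ∈ dualCone (barCone ac C) := rho0_mem_dual hnn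
  have hsum : pairQ (ρ' + c • rho0 n) vb + (-c) * pairQ (rho0 n) vb = 0 := by
    rw [← pairQ_smul_left, ← pairQ_add_left]
    have heq : ρ' + c • rho0 n + (-c) • rho0 n = ρ' := by
      funext i; simp
    rw [heq]
    exact hρv
  have h1 : 0 ≤ pairQ (ρ' + c • rho0 n) vb := hρ''d vb hvbG
  have h2 : 0 ≤ pairQ (rho0 n) vb := hrho0d vb hvbG
  have h3 : pairQ (rho0 n) vb = 0 := by nlinarith
  have hmem : rho0 n ∈ raySet ρ' := by rw [hface]; exact ⟨hrho0d, h3⟩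
  obtain ⟨d, hd, hdeq⟩ := hmem
  have hd0 : d ≠ 0 := by
    intro h
    rw [h, zero_smul] at hdeq
    have := congrFun hdeq (Fin.last n)
    simp [rho0] at this
  have hres0 : res ρ' = 0 := by
    funext i
    have h := congrFun hdeq i.castSucc
    simp only [Pi.smul_apply, smul_eq_mul] at h
    have h0 : rho0 n i.castSucc = 0 := by simp [rho0]
    rw [h0] at h
    have := (mul_eq_zero.1 h.symm).resolve_left hd0
    simpa [res] using this
  exact hne (eq_rho0_of hprim hres0 (le_of_lt hneg))

/-- In the setting of the cone `𝒢̄ ⊆ M̄_ℚ` generated by `𝒢 ∪ w(𝒢)`: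
there is a unique `ρ₀ ∈ ℰ̄¹` vanishing on `𝒢`, and a unique `ρ₀' ∈ ℰ̄¹`
vanishing on `w(𝒢)`; they satisfy `⟨ρ₀, α⟩ = −1`, `⟨ρ₀', α⟩ = 1`, and
moreover `α ∈ ℜ_{ρ₀}(ℰ̄)`. -/
theorem rho_zero_exists_unique {n : ℕ} (hn : 1 ≤ n)
    (C : Set (Fin n → ℚ)) (hfg : IsFGCone C) (hfull : Submodule.span ℚ C = ⊤)
    (ac : Fin (n + 1) → ℚ) (hacL : IsLatticePt ac)
    (haca : pairQ ac (alphaVec n) = 2)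
    (hnn : ∀ v ∈ C, 0 ≤ pairQ ac (emb v))
    (hnz : ∃ v ∈ C, pairQ ac (emb v) ≠ 0) :
    (∃! ρ₀ : Fin (n + 1) → ℚ,
        ρ₀ ∈ E1 (barCone ac C) ∧ ∀ v ∈ C, pairQ ρ₀ (emb v) = 0) ∧
    (∃! ρ₀' : Fin (n + 1) → ℚ,
        ρ₀' ∈ E1 (barCone ac C) ∧ ∀ v ∈ C, pairQ ρ₀' (wmap ac (emb v)) = 0) ∧
    (∀ ρ₀ ρ₀' : Fin (n + 1) → ℚ,
      (ρ₀ ∈ E1 (barCone ac C) ∧ ∀ v ∈ C, pairQ ρ₀ (emb v) = 0) →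
      (ρ₀' ∈ E1 (barCone ac C) ∧ ∀ v ∈ C, pairQ ρ₀' (wmap ac (emb v)) = 0) →
      pairQ ρ₀ (alphaVec n) = -1 ∧ pairQ ρ₀' (alphaVec n) = 1 ∧
      alphaVec n ∈ DemRootsAt (barCone ac C) ρ₀) := by
  obtain ⟨S, hS⟩ := hfg
  have hac2 : ac (Fin.last n) = 2 := ac_last_eq_two haca
  have key1 : ∀ ρ : Fin (n + 1) → ℚ,
      (ρ ∈ E1 (barCone ac C) ∧ ∀ v ∈ C, pairQ ρ (emb v) = 0) → ρ = rho0 n := by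
    rintro ρ ⟨hE, hv⟩
    obtain ⟨h1, h2⟩ := dual_vanish_emb hfull hnn hnz (E1_mem_dual hE) hv
    exact eq_rho0_of hE.1 h1 h2
  have key2 : ∀ ρ : Fin (n + 1) → ℚ,
      (ρ ∈ E1 (barCone ac C) ∧ ∀ v ∈ C, pairQ ρ (wmap ac (emb v)) = 0) →
        ρ = ac - alphaVec n := by
    rintro ρ ⟨hE, hv⟩
    obtain ⟨h1, h2⟩ := dual_vanish_wemb hfull hnn hnz (E1_mem_dual hE) hv
    exact eq_rho0'_of hE.1 hacL hac2 h1 h2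
  have mem1 : rho0 n ∈ E1 (barCone ac C) ∧ ∀ v ∈ C, pairQ (rho0 n) (emb v) = 0 :=
    ⟨⟨isPrimitive_rho0, face_rho0 S hS hfull hnn hnz⟩, fun v _ => rho0_pair_emb v⟩
  have mem2 : (ac - alphaVec n) ∈ E1 (barCone ac C) ∧
      ∀ v ∈ C, pairQ (ac - alphaVec n) (wmap ac (emb v)) = 0 :=
    ⟨⟨isPrimitive_rho0' hacL hac2, face_rho0' S hS hfull hac2 hnn hnz⟩,
      fun v _ => rho0'_pair_wmap hac2 v⟩
  refine ⟨⟨rho0 n, mem1, fun y hy => key1 y hy⟩,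
    ⟨ac - alphaVec n, mem2, fun y hy => key2 y hy⟩, ?_⟩
  intro ρ₀ ρ₀' h1 h2
  have e1 : ρ₀ = rho0 n := key1 _ h1
  have e2 : ρ₀' = ac - alphaVec n := key2 _ h2
  refine ⟨by rw [e1, pairQ_alpha, rho0_last],
    by rw [e2, pairQ_alpha, sub_alpha_last hac2], ?_⟩
  rw [e1]
  refine ⟨?_, ?_, ?_⟩
  · intro i
    refine Fin.lastCases ⟨1, by simp [alphaVec]⟩ (fun j => ⟨0, by simp [alphaVec]⟩) i
  · rw [pairQ_alpha, rho0_last]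
  · intro ρ' hρ' hne
    rw [pairQ_alpha]
    exact E1_last_nonneg hnn hρ' hne

end RootSubgroups
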